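/- arXiv:1511.07628 — 8 statements merged into one kernel-verified Lean document; each statement's English description precedes it below -/
import Mathlib

section
/- Let A be a real n×m matrix, let 0 < p ≤ 1, let x* ∈ ℝ^m, and set t = ‖x*‖₀. If for every nonzero x ∈ Ker(A) and every index set S ⊆ {1,…,m} with |S| ≤ t one has ‖x_S‖_p^p < ‖x_{S^C}‖_p^p, then x* is the unique minimizer of ‖·‖_p^p over the affine set {x ∈ ℝ^m : Ax = Ax*}; that is, every y ∈ ℝ^m with Ay = Ax* and y ≠ x* satisfies ‖x*‖_p^p < ‖y‖_p^p. -/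
noncomputable def l0norm {m : ℕ} (x : Fin m → ℝ) : ℕ :=
  (Finset.univ.filter (fun i => x i ≠ 0)).card

/-!
Put `h = x* - y ∈ Ker A` and let `S` be the support of `x*`, so `|S| = ‖x*‖₀`. Since
`t ↦ |t|^p` is subadditive for `p ≤ 1`, on `S` we have `|x*_i|^p ≤ |y_i|^p + |h_i|^p`, while off
`S` we have `|y_i| = |h_i|`. Summing, `‖x*‖_p^p - ‖y‖_p^p ≤ ‖h_S‖_p^p - ‖h_{Sᶜ}‖_p^p`, which the
null space property makes negative.
-/

open Finset

lemma Real.abs_add_rpow_le {p : ℝ} (a b : ℝ) (hp0 : 0 ≤ p) (hp1 : p ≤ 1) :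
    |a + b| ^ p ≤ |a| ^ p + |b| ^ p :=
  calc |a + b| ^ p ≤ (|a| + |b|) ^ p := Real.rpow_le_rpow (abs_nonneg _) (abs_add_le a b) hp0
    _ ≤ |a| ^ p + |b| ^ p := Real.rpow_add_le_add_rpow (abs_nonneg a) (abs_nonneg b) hp0 hp1

lemma sum_abs_rpow_sub_sum_abs_rpow_le {ι : Type*} [Fintype ι] [DecidableEq ι] {p : ℝ}
    (hp0 : 0 < p) (hp1 : p ≤ 1) (x y : ι → ℝ) {S : Finset ι} (hS : ∀ i ∉ S, x i = 0) :
    ∑ i, |x i| ^ p - ∑ i, |y i| ^ p ≤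
      ∑ i ∈ S, |(x - y) i| ^ p - ∑ i ∈ Sᶜ, |(x - y) i| ^ p := by
  have hx_compl : ∑ i ∈ Sᶜ, |x i| ^ p = 0 :=
    sum_eq_zero fun i hi => by
      rw [hS i (mem_compl.mp hi), abs_zero, Real.zero_rpow hp0.ne']
  have hy_compl : ∑ i ∈ Sᶜ, |y i| ^ p = ∑ i ∈ Sᶜ, |(x - y) i| ^ p :=
    sum_congr rfl fun i hi => by
      rw [Pi.sub_apply, hS i (mem_compl.mp hi), zero_sub, abs_neg]
  have hx_on : ∑ i ∈ S, |x i| ^ p ≤ ∑ i ∈ S, |y i| ^ p + ∑ i ∈ S, |(x - y) i| ^ p := by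
    rw [← sum_add_distrib]
    refine sum_le_sum fun i _ => ?_
    simpa using Real.abs_add_rpow_le (y i) (x i - y i) hp0.le hp1
  rw [← sum_compl_add_sum S, ← sum_compl_add_sum S (fun i => |y i| ^ p), hx_compl, hy_compl]
  linarith

/-- Sufficiency of the null space property for `l_p`-minimization, `0 < p ≤ 1`.
If for every nonzero `x ∈ Ker A` and every index set `S` with `|S| ≤ ‖x*‖₀` we have
`‖x_S‖_p^p < ‖x_{Sᶜ}‖_p^p`, then `x*` is the unique minimizer of `‖·‖_p^p` over
`{x | A x = A x*}`. -/
theorem stmt0 (n m : ℕ) (A : Matrix (Fin n) (Fin m) ℝ) (p : ℝ) (hp0 : 0 < p) (hp1 : p ≤ 1)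
    (xstar : Fin m → ℝ)
    (hNSP : ∀ x : Fin m → ℝ, x ≠ 0 → A.mulVec x = 0 →
      ∀ S : Finset (Fin m), S.card ≤ l0norm xstar →
        ∑ i ∈ S, |x i| ^ p < ∑ i ∈ Sᶜ, |x i| ^ p) :
    ∀ y : Fin m → ℝ, A.mulVec y = A.mulVec xstar → y ≠ xstar →
      ∑ i, |xstar i| ^ p < ∑ i, |y i| ^ p := by
  intro y hAy hne
  set S := univ.filter fun i => xstar i ≠ 0
  have hS : ∀ i ∉ S, xstar i = 0 := fun i hi => by simpa [S] using hi
  have hker : A.mulVec (xstar - y) = 0 := by rw [Matrix.mulVec_sub, hAy, sub_self]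
  have hnsp := hNSP (xstar - y) (sub_ne_zero.mpr hne.symm) hker S le_rfl
  linarith [sum_abs_rpow_sub_sum_abs_rpow_le hp0 hp1 xstar y hS]
end

section
/- Let A be a real n×m matrix, let x* ∈ ℝ^m, and set t = ‖x*‖₀. If for every nonzero x ∈ Ker(A) and every index set S ⊆ {1,…,m} with |S| ≤ t the number of indices i ∈ S with x_i ≠ 0 is strictly smaller than the number of indices i ∈ S^C with x_i ≠ 0, then x* is the unique minimizer of ‖·‖₀ over the affine set {x ∈ ℝ^m : Ax = Ax*}; that is, every y ∈ ℝ^m with Ay = Ax* and y ≠ x* satisfies ‖x*‖₀ < ‖y‖₀. -/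
/-- Sufficiency of the null space property for `l_0`-minimization (case `p = 0`).
If for every nonzero `x ∈ Ker A` and every index set `S` with `|S| ≤ ‖x*‖₀`, the number of
nonzero entries of `x` inside `S` is strictly smaller than the number outside `S`, then `x*`
is the unique minimizer of `‖·‖₀` over `{x | A x = A x*}`. -/
theorem stmt1 (n m : ℕ) (A : Matrix (Fin n) (Fin m) ℝ) (xstar : Fin m → ℝ)
    (hNSP : ∀ x : Fin m → ℝ, x ≠ 0 → A.mulVec x = 0 →
      ∀ S : Finset (Fin m), S.card ≤ l0norm xstar →
        (S.filter (fun i => x i ≠ 0)).card < (Sᶜ.filter (fun i => x i ≠ 0)).card) :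
    ∀ y : Fin m → ℝ, A.mulVec y = A.mulVec xstar → y ≠ xstar →
      l0norm xstar < l0norm y := by
  intro y hy hne
  set x : Fin m → ℝ := xstar - y with hx
  have hx0 : x ≠ 0 := by
    intro h
    apply hne
    have := sub_eq_zero.mp h
    exact this.symm
  have hker : A.mulVec x = 0 := by
    rw [hx, Matrix.mulVec_sub, hy, sub_self]
  set S : Finset (Fin m) := Finset.univ.filter (fun i => xstar i ≠ 0) with hS
  have hScard : S.card = l0norm xstar := rfl
  have key := hNSP x hx0 hker S (le_of_eq hScard)
  -- S \ supp x ⊆ supp y ∩ S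
  have h1 : (S.filter (fun i => ¬ x i ≠ 0)) ⊆ Finset.univ.filter (fun i => y i ≠ 0) := by
    intro i hi
    simp only [Finset.mem_filter, hS, Finset.mem_univ, true_and, not_not] at hi ⊢
    have : y i = xstar i - x i := by simp [hx]
    rw [this, hi.2, sub_zero]
    exact hi.1
  have h2 : (Sᶜ.filter (fun i => x i ≠ 0)) ⊆ Finset.univ.filter (fun i => y i ≠ 0) := by
    intro i hi
    simp only [Finset.mem_filter, Finset.mem_compl, hS, Finset.mem_univ, true_and,
      not_not] at hi ⊢
    intro h
    apply hi.2
    have hxi : xstar i = 0 := hi.1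
    simp [hx, hxi, h]
  have hdisj : Disjoint (S.filter (fun i => ¬ x i ≠ 0)) (Sᶜ.filter (fun i => x i ≠ 0)) := by
    exact Finset.disjoint_filter_filter disjoint_compl_right
  have hsplit : S.card = (S.filter (fun i => x i ≠ 0)).card
      + (S.filter (fun i => ¬ x i ≠ 0)).card := (Finset.card_filter_add_card_filter_not
      (p := fun i => x i ≠ 0)).symm
  have hunion : (S.filter (fun i => ¬ x i ≠ 0)).card + (Sᶜ.filter (fun i => x i ≠ 0)).card
      ≤ l0norm y := by
    rw [← Finset.card_union_of_disjoint hdisj]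
    exact Finset.card_le_card (Finset.union_subset h1 h2)
  calc l0norm xstar = (S.filter (fun i => x i ≠ 0)).card
        + (S.filter (fun i => ¬ x i ≠ 0)).card := by rw [← hScard]; exact hsplit
    _ < (Sᶜ.filter (fun i => x i ≠ 0)).card + (S.filter (fun i => ¬ x i ≠ 0)).card := by
        omega
    _ ≤ l0norm y := by omega
end

section
/- Let A be a real n×m matrix, let 0 < p ≤ 1, and let t be a natural number. Then the following are equivalent: (i) for every nonzero x ∈ Ker(A) and every index set S ⊆ {1,…,m} with |S| ≤ t, ‖x_S‖_p^p < ‖x_{S^C}‖_p^p; (ii) every x* ∈ ℝ^m with ‖x*‖₀ ≤ t is the unique minimizer of ‖·‖_p^p over {x ∈ ℝ^m : Ax = Ax*}, i.e. every y ≠ x* with Ay = Ax* satisfies ‖x*‖_p^p < ‖y‖_p^p. -/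
lemma abs_rpow_add_le (p : ℝ) (hp0 : 0 < p) (hp1 : p ≤ 1) (a b : ℝ) :
    |a + b| ^ p ≤ |a| ^ p + |b| ^ p := by
  have h1 : |a + b| ^ p ≤ (|a| + |b|) ^ p :=
    Real.rpow_le_rpow (abs_nonneg _) (abs_add_le a b) hp0.le
  refine h1.trans ?_
  have := NNReal.rpow_add_le_add_rpow (Real.nnabs a) (Real.nnabs b) hp0.le hp1
  have h2 := (NNReal.coe_le_coe).2 this
  push_cast at h2
  simpa [Real.coe_nnabs] using h2

/-- Corollary 1: For `0 < p ≤ 1`, the null space property of order `t`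
(`‖x_S‖_p^p < ‖x_{Sᶜ}‖_p^p` for all nonzero kernel vectors `x` and all `|S| ≤ t`) holds
if and only if every `t`-sparse vector `x*` is the unique minimizer of `‖·‖_p^p` over
`{x | A x = A x*}`. -/
theorem stmt2 (n m : ℕ) (A : Matrix (Fin n) (Fin m) ℝ) (p : ℝ) (hp0 : 0 < p) (hp1 : p ≤ 1)
    (t : ℕ) :
    (∀ x : Fin m → ℝ, x ≠ 0 → A.mulVec x = 0 →
      ∀ S : Finset (Fin m), S.card ≤ t →
        ∑ i ∈ S, |x i| ^ p < ∑ i ∈ Sᶜ, |x i| ^ p) ↔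
    (∀ xstar : Fin m → ℝ, l0norm xstar ≤ t →
      ∀ y : Fin m → ℝ, A.mulVec y = A.mulVec xstar → y ≠ xstar →
        ∑ i, |xstar i| ^ p < ∑ i, |y i| ^ p) := by
  constructor
  · intro hNSP xstar hsp y hAy hne
    set S : Finset (Fin m) := Finset.univ.filter (fun i => xstar i ≠ 0) with hS
    have hcard : S.card ≤ t := hsp
    set x : Fin m → ℝ := xstar - y with hx
    have hx0 : x ≠ 0 := sub_ne_zero.2 (Ne.symm hne)
    have hAx : A.mulVec x = 0 := by
      rw [hx, A.mulVec_sub, hAy, sub_self]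
    have hkey := hNSP x hx0 hAx S hcard
    -- off S, xstar = 0 so x i = -y i
    have hoff : ∀ i ∈ Sᶜ, xstar i = 0 := by
      intro i hi
      simpa [hS] using Finset.mem_compl.mp hi
    have hsum1 : ∑ i, |xstar i| ^ p = ∑ i ∈ S, |xstar i| ^ p := by
      rw [← Finset.sum_add_sum_compl S]
      have : ∑ i ∈ Sᶜ, |xstar i| ^ p = 0 := by
        apply Finset.sum_eq_zero
        intro i hi
        simp [hoff i hi, Real.zero_rpow hp0.ne']
      simp [this]
    have hsum2 : ∑ i ∈ Sᶜ, |x i| ^ p = ∑ i ∈ Sᶜ, |y i| ^ p := by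
      apply Finset.sum_congr rfl
      intro i hi
      simp [hx, hoff i hi, abs_sub_comm]
    have htri : ∑ i ∈ S, |xstar i| ^ p ≤ ∑ i ∈ S, |y i| ^ p + ∑ i ∈ S, |x i| ^ p := by
      rw [← Finset.sum_add_distrib]
      apply Finset.sum_le_sum
      intro i _
      have : xstar i = y i + x i := by simp [hx]
      rw [this]
      exact abs_rpow_add_le p hp0 hp1 _ _
    calc ∑ i, |xstar i| ^ p = ∑ i ∈ S, |xstar i| ^ p := hsum1
      _ ≤ ∑ i ∈ S, |y i| ^ p + ∑ i ∈ S, |x i| ^ p := htri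
      _ < ∑ i ∈ S, |y i| ^ p + ∑ i ∈ Sᶜ, |x i| ^ p := by linarith
      _ = ∑ i ∈ S, |y i| ^ p + ∑ i ∈ Sᶜ, |y i| ^ p := by rw [hsum2]
      _ = ∑ i, |y i| ^ p := Finset.sum_add_sum_compl S _
  · intro hrec x hx0 hAx S hcard
    set xstar : Fin m → ℝ := fun i => if i ∈ S then x i else 0 with hxs
    set y : Fin m → ℝ := fun i => if i ∈ S then 0 else -x i with hy
    have hsub : xstar - y = x := by
      funext i
      by_cases h : i ∈ S <;> simp [hxs, hy, h]
    have hsp : l0norm xstar ≤ t := by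
      refine le_trans ?_ hcard
      unfold l0norm
      apply Finset.card_le_card
      intro i hi
      simp only [Finset.mem_filter, Finset.mem_univ, true_and] at hi
      by_contra h
      exact hi (by simp [hxs, h])
    have hAy : A.mulVec y = A.mulVec xstar := by
      have : A.mulVec (xstar - y) = 0 := by rw [hsub]; exact hAx
      rw [A.mulVec_sub, sub_eq_zero] at this
      exact this.symm
    have hne : y ≠ xstar := by
      intro h
      apply hx0
      rw [← hsub, h, sub_self]
    have := hrec xstar hsp y hAy hne
    have e1 : ∑ i, |xstar i| ^ p = ∑ i ∈ S, |x i| ^ p := by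
      rw [← Finset.sum_add_sum_compl S (fun i => |xstar i| ^ p)]
      have h1 : ∑ i ∈ S, |xstar i| ^ p = ∑ i ∈ S, |x i| ^ p :=
        Finset.sum_congr rfl (fun i hi => by simp [hxs, hi])
      have h2 : ∑ i ∈ Sᶜ, |xstar i| ^ p = 0 :=
        Finset.sum_eq_zero (fun i hi => by
          simp [hxs, Finset.mem_compl.mp hi, Real.zero_rpow hp0.ne'])
      rw [h1, h2, add_zero]
    have e2 : ∑ i, |y i| ^ p = ∑ i ∈ Sᶜ, |x i| ^ p := by
      rw [← Finset.sum_add_sum_compl S (fun i => |y i| ^ p)]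
      have h1 : ∑ i ∈ S, |y i| ^ p = 0 :=
        Finset.sum_eq_zero (fun i hi => by simp [hy, hi, Real.zero_rpow hp0.ne'])
      have h2 : ∑ i ∈ Sᶜ, |y i| ^ p = ∑ i ∈ Sᶜ, |x i| ^ p :=
        Finset.sum_congr rfl (fun i hi => by simp [hy, Finset.mem_compl.mp hi])
      rw [h1, h2, zero_add]
    rw [e1, e2] at this
    exact this
end

section
/- Let A be a real n×m matrix, let t be a natural number, and let 0 < p* ≤ 1. If for every nonzero x ∈ Ker(A) and every index set S ⊆ {1,…,m} with |S| ≤ t one has ‖x_S‖_{p*}^{p*} < ‖x_{S^C}‖_{p*}^{p*}, then for every p with 0 < p ≤ p* it also holds that for every nonzero x ∈ Ker(A) and every index set S with |S| ≤ t, ‖x_S‖_p^p < ‖x_{S^C}‖_p^p. -/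
private lemma cross_rpow (p q a b : ℝ) (hp : 0 < p) (hpq : p ≤ q) (hb : 0 ≤ b) (hba : b ≤ a) :
    a ^ p * b ^ q ≤ a ^ q * b ^ p := by
  rcases eq_or_lt_of_le hb with hb0 | hb0
  · simp [← hb0, Real.zero_rpow hp.ne', Real.zero_rpow (hp.trans_le hpq).ne']
  · have ha : 0 < a := hb0.trans_le hba
    have h1 : (1:ℝ) ≤ a / b := (one_le_div hb0).mpr hba
    have h2 : (a / b) ^ p ≤ (a / b) ^ q := Real.rpow_le_rpow_of_exponent_le h1 hpq
    rw [Real.div_rpow ha.le hb0.le, Real.div_rpow ha.le hb0.le,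
      div_le_div_iff₀ (Real.rpow_pos_of_pos hb0 p) (Real.rpow_pos_of_pos hb0 q)] at h2
    linarith

/-- Corollary 2: If the null space property condition
`‖x_S‖_{p*}^{p*} < ‖x_{Sᶜ}‖_{p*}^{p*}` holds for some exponent `p* ∈ (0,1]`, then it holds
for every exponent `p` with `0 < p ≤ p*`. -/
theorem stmt3 (n m : ℕ) (A : Matrix (Fin n) (Fin m) ℝ) (t : ℕ)
    (pstar : ℝ) (hps0 : 0 < pstar) (hps1 : pstar ≤ 1)
    (hNSP : ∀ x : Fin m → ℝ, x ≠ 0 → A.mulVec x = 0 →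
      ∀ S : Finset (Fin m), S.card ≤ t →
        ∑ i ∈ S, |x i| ^ pstar < ∑ i ∈ Sᶜ, |x i| ^ pstar) :
    ∀ p : ℝ, 0 < p → p ≤ pstar →
      ∀ x : Fin m → ℝ, x ≠ 0 → A.mulVec x = 0 →
        ∀ S : Finset (Fin m), S.card ≤ t →
          ∑ i ∈ S, |x i| ^ p < ∑ i ∈ Sᶜ, |x i| ^ p := by
  intro p hp0 hpps x hx hAx S hScard
  set f : Fin m → ℝ := fun i => |x i| ^ p with hf
  set g : Fin m → ℝ := fun i => |x i| ^ pstar with hg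
  have hf0 : ∀ i, 0 ≤ f i := fun i => Real.rpow_nonneg (abs_nonneg _) p
  have hg0 : ∀ i, 0 ≤ g i := fun i => Real.rpow_nonneg (abs_nonneg _) pstar
  -- choose T of the same cardinality as S maximizing the p-sum
  have hSmem : S ∈ (Finset.univ : Finset (Fin m)).powersetCard S.card := by
    simp [Finset.mem_powersetCard]
  obtain ⟨T, hTmem, hTmax⟩ :=
    ((Finset.univ : Finset (Fin m)).powersetCard S.card).exists_max_image
      (fun T => ∑ i ∈ T, f i) ⟨S, hSmem⟩
  have hTcard : T.card = S.card := (Finset.mem_powersetCard.mp hTmem).2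
  -- domination: entries in T are at least entries outside T
  have hdom : ∀ i ∈ T, ∀ j ∉ T, |x j| ≤ |x i| := by
    intro i hi j hj
    by_contra hlt
    push_neg at hlt
    have hfij : f i < f j := Real.rpow_lt_rpow (abs_nonneg _) hlt hp0
    have hjT : j ∉ T.erase i := fun h => hj (Finset.mem_of_mem_erase h)
    have hT1 : 1 ≤ S.card := hTcard ▸ Finset.card_pos.mpr ⟨i, hi⟩
    have hcard' : (insert j (T.erase i)).card = S.card := by
      rw [Finset.card_insert_of_notMem hjT, Finset.card_erase_of_mem hi, hTcard]
      omega
    have hT'mem : insert j (T.erase i) ∈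
        (Finset.univ : Finset (Fin m)).powersetCard S.card :=
      Finset.mem_powersetCard.mpr ⟨Finset.subset_univ _, hcard'⟩
    have := hTmax _ hT'mem
    rw [Finset.sum_insert hjT, Finset.sum_erase_eq_sub hi] at this
    have hle := hTmax T hTmem
    linarith
  -- sums
  set Sf := ∑ i ∈ T, f i with hSf
  set Cf := ∑ i ∈ Tᶜ, f i with hCf
  set Sg := ∑ i ∈ T, g i with hSg
  set Cg := ∑ i ∈ Tᶜ, g i with hCg
  have hgT : Sg < Cg := hNSP x hx hAx T (hTcard ▸ hScard)
  have hSgnn : 0 ≤ Sg := Finset.sum_nonneg fun i _ => hg0 i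
  have hSfnn : 0 ≤ Sf := Finset.sum_nonneg fun i _ => hf0 i
  have hCfnn : 0 ≤ Cf := Finset.sum_nonneg fun i _ => hf0 i
  have hCgpos : 0 < Cg := lt_of_le_of_lt hSgnn hgT
  -- cross inequality on sums
  have hcross : Sf * Cg ≤ Sg * Cf := by
    rw [hSf, hCg, hSg, hCf, Finset.sum_mul_sum, Finset.sum_mul_sum]
    refine Finset.sum_le_sum fun i hi => Finset.sum_le_sum fun j hj => ?_
    exact cross_rpow p pstar (|x i|) (|x j|) hp0 hpps (abs_nonneg _)
      (hdom i hi j (Finset.mem_compl.mp hj))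
  -- total sum is positive
  have hxne : ∃ i, x i ≠ 0 := by
    by_contra h
    push_neg at h
    exact hx (funext h)
  obtain ⟨i0, hi0⟩ := hxne
  have htot : 0 < Sf + Cf := by
    have h1 : 0 < f i0 := Real.rpow_pos_of_pos (abs_pos.mpr hi0) p
    have h2 : f i0 ≤ ∑ i, f i :=
      Finset.single_le_sum (fun i _ => hf0 i) (Finset.mem_univ i0)
    have h3 : Sf + Cf = ∑ i, f i := Finset.sum_add_sum_compl T f
    linarith
  have hCfpos : 0 < Cf := by
    by_contra h
    push_neg at h
    have hCf0 : Cf = 0 := le_antisymm h hCfnn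
    have : Sf ≤ 0 := by
      have := hcross
      rw [hCf0, mul_zero] at this
      nlinarith
    linarith
  have hTlt : Sf < Cf := by
    have h1 : Sg * Cf < Cg * Cf := mul_lt_mul_of_pos_right hgT hCfpos
    have h2 : Sf * Cg < Cf * Cg := by nlinarith
    exact lt_of_mul_lt_mul_right h2 hCgpos.le
  -- transfer from T back to S
  have hSle : ∑ i ∈ S, f i ≤ Sf := hTmax S hSmem
  have hStot : ∑ i ∈ S, f i + ∑ i ∈ Sᶜ, f i = ∑ i, f i := Finset.sum_add_sum_compl S f
  have hTtot : Sf + Cf = ∑ i, f i := Finset.sum_add_sum_compl T f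
  have : Cf ≤ ∑ i ∈ Sᶜ, f i := by linarith
  calc ∑ i ∈ S, f i ≤ Sf := hSle
    _ < Cf := hTlt
    _ ≤ ∑ i ∈ Sᶜ, f i := this
end

section
/- Let A be a real n×m matrix and let t be a natural number. Then every nonzero x ∈ Ker(A) satisfies ‖x‖₀ ≥ 2t+1 if and only if every x* ∈ ℝ^m with ‖x*‖₀ ≤ t is the unique minimizer of ‖·‖₀ over {x ∈ ℝ^m : Ax = Ax*} (i.e., every y ≠ x* with Ay = Ax* satisfies ‖x*‖₀ < ‖y‖₀). -/
lemma l0norm_sub_le {m : ℕ} (a b : Fin m → ℝ) :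
    l0norm (a - b) ≤ l0norm a + l0norm b := by
  classical
  unfold l0norm
  refine le_trans (Finset.card_le_card ?_) (Finset.card_union_le _ _)
  intro i hi
  simp only [Finset.mem_filter, Finset.mem_union, Finset.mem_univ, true_and] at *
  by_contra h
  push_neg at h
  simp [Pi.sub_apply, h.1, h.2] at hi

/-- Corollary 3(a), spark-type form: every nonzero kernel vector of `A` has at
least `2t+1` nonzero entries if and only if every `t`-sparse vector `x*` is the unique
minimizer of `‖·‖₀` over `{x | A x = A x*}`. -/
theorem stmt4 (n m : ℕ) (A : Matrix (Fin n) (Fin m) ℝ) (t : ℕ) :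
    (∀ x : Fin m → ℝ, x ≠ 0 → A.mulVec x = 0 → 2 * t + 1 ≤ l0norm x) ↔
    (∀ xstar : Fin m → ℝ, l0norm xstar ≤ t →
      ∀ y : Fin m → ℝ, A.mulVec y = A.mulVec xstar → y ≠ xstar →
        l0norm xstar < l0norm y) := by
  classical
  constructor
  · intro h xstar hxs y hAy hne
    have hker : A.mulVec (xstar - y) = 0 := by
      rw [Matrix.mulVec_sub, hAy, sub_self]
    have hne0 : xstar - y ≠ 0 := sub_ne_zero.mpr (Ne.symm hne)
    have h1 := h _ hne0 hker
    have h2 := l0norm_sub_le xstar y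
    omega
  · intro h x hx hker
    by_contra hlt
    push_neg at hlt
    set supp := Finset.univ.filter (fun i => x i ≠ 0) with hsupp
    have hcard : supp.card ≤ 2 * t := by
      have hx2 : l0norm x ≤ 2 * t := by omega
      simpa [l0norm, hsupp] using hx2
    obtain ⟨S, hSsub, hScard⟩ :=
      Finset.exists_subset_card_eq (min_le_right t supp.card)
    set T := supp \ S with hT
    have hTcard : T.card ≤ t := by
      have := Finset.card_sdiff_of_subset hSsub
      rw [hT, this, hScard]
      omega
    have hScard' : S.card ≤ t := by rw [hScard]; exact min_le_left _ _
    set u : Fin m → ℝ := fun i => if i ∈ S then x i else 0 with hu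
    set v : Fin m → ℝ := fun i => if i ∈ T then -x i else 0 with hv
    have hxuv : x = u - v := by
      funext i
      by_cases hiS : i ∈ S
      · have hiT : i ∉ T := by simp [hT, hiS]
        simp [hu, hv, hiS, hiT]
      · by_cases hiT : i ∈ T
        · simp [hu, hv, hiS, hiT]
        · have : i ∉ supp := fun hi => hiT (Finset.mem_sdiff.mpr ⟨hi, hiS⟩)
          have hx0 : x i = 0 := by
            by_contra hc
            exact this (by simp [hsupp, hc])
          simp [hu, hv, hiS, hiT, hx0]
    have hlu : l0norm u = S.card := by
      unfold l0norm
      congr 1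
      ext i
      simp only [Finset.mem_filter, Finset.mem_univ, true_and, hu]
      constructor
      · intro hi
        by_contra hc
        simp [hc] at hi
      · intro hi
        have : x i ≠ 0 := by
          have := hSsub hi
          simpa [hsupp] using this
        simp [hi, this]
    have hlv : l0norm v = T.card := by
      unfold l0norm
      congr 1
      ext i
      simp only [Finset.mem_filter, Finset.mem_univ, true_and, hv]
      constructor
      · intro hi
        by_contra hc
        simp [hc] at hi
      · intro hi
        have : x i ≠ 0 := by
          have := (Finset.mem_sdiff.mp hi).1
          simpa [hsupp] using this
        simp [hi, this]
    have hAuv : A.mulVec u = A.mulVec v := by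
      have : A.mulVec (u - v) = 0 := by rw [← hxuv]; exact hker
      rw [Matrix.mulVec_sub] at this
      exact sub_eq_zero.mp this
    have hvu : v ≠ u := by
      intro heq
      exact hx (by rw [hxuv, heq, sub_self])
    have h1 := h u (by rw [hlu]; exact hScard') v hAuv.symm hvu
    have h2 := h v (by rw [hlv]; exact hTcard) u hAuv (Ne.symm hvu)
    omega
end

section
/- Let A be a real n×m matrix and b ∈ ℝ^n a vector such that the system Ax = b has at least one solution. Then there exists a constant p(A,b) > 0 such that for every p with 0 < p < p(A,b), every minimizer of ‖·‖_p^p over {x ∈ ℝ^m : Ax = b} is also a minimizer of ‖·‖₀ over {x ∈ ℝ^m : Ax = b}. -/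
open Filter Set

private lemma mid_strict {p u v : ℝ} (hp : 0 < p) (hp1 : p < 1) (hu : 0 < u) (hv : 0 < v)
    (huv : u ≠ v) : u ^ p + v ^ p < 2 * (((u + v) / 2) ^ p) := by
  have h := (Real.strictConcaveOn_rpow hp hp1).2 (Set.mem_Ici.2 hu.le) (Set.mem_Ici.2 hv.le)
    huv (by norm_num : (0:ℝ) < 1/2) (by norm_num : (0:ℝ) < 1/2) (by norm_num)
  simp only [smul_eq_mul] at h
  have he : (1/2 : ℝ) * u + 1/2 * v = (u + v) / 2 := by ring
  rw [he] at h
  linarith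

private lemma tendsto_abs_rpow_sum {m : ℕ} (x : Fin m → ℝ) :
    Tendsto (fun p : ℝ => ∑ i, |x i| ^ p) (nhdsWithin 0 (Set.Ioi 0))
      (nhds ((Finset.univ.filter (fun i => x i ≠ 0)).card : ℝ)) := by
  have hcast : ((Finset.univ.filter (fun i => x i ≠ 0)).card : ℝ)
      = ∑ i : Fin m, (if x i ≠ 0 then (1:ℝ) else 0) := by
    rw [Finset.card_filter]
    push_cast [apply_ite (Nat.cast : ℕ → ℝ)]
    rfl
  rw [hcast]
  refine tendsto_finset_sum _ (fun i _ => ?_)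
  by_cases hxi : x i = 0
  · simp only [hxi, ne_eq, not_true_eq_false, if_false]
    refine Tendsto.congr' ?_ tendsto_const_nhds
    filter_upwards [self_mem_nhdsWithin] with p hp
    simp [Real.zero_rpow (ne_of_gt hp)]
  · simp only [hxi, ne_eq, not_false_eq_true, if_true]
    have ha : 0 < |x i| := abs_pos.2 hxi
    have hc : Tendsto (fun p : ℝ => Real.exp (Real.log |x i| * p)) (nhds 0) (nhds 1) := by
      have hcont : Continuous (fun p : ℝ => Real.exp (Real.log |x i| * p)) :=
        Real.continuous_exp.comp (continuous_const.mul continuous_id)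
      have := hcont.tendsto (0:ℝ)
      simpa using this
    have : Tendsto (fun p : ℝ => |x i| ^ p) (nhds 0) (nhds 1) :=
      hc.congr (fun p => (Real.rpow_def_of_pos ha p).symm)
    exact this.mono_left nhdsWithin_le_nhds

private lemma kernel_of_min {n m : ℕ} (A : Matrix (Fin n) (Fin m) ℝ) (b : Fin n → ℝ)
    {p : ℝ} (hp : 0 < p) (hp1 : p < 1) (xbar : Fin m → ℝ) (hxb : A.mulVec xbar = b)
    (hmin : ∀ y : Fin m → ℝ, A.mulVec y = b → ∑ i, |xbar i| ^ p ≤ ∑ i, |y i| ^ p)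
    (d : Fin m → ℝ) (hd : A.mulVec d = 0) (hsupp : ∀ i, xbar i = 0 → d i = 0) : d = 0 := by
  by_contra hd0
  obtain ⟨j, hj⟩ : ∃ j, d j ≠ 0 := by
    by_contra h
    push_neg at h
    exact hd0 (funext h)
  have hne : (Finset.univ : Finset (Fin m)).Nonempty := ⟨j, Finset.mem_univ j⟩
  set g : Fin m → ℝ := fun i => if d i = 0 then 1 else |xbar i| / |d i| with hg
  have hgpos : ∀ i ∈ Finset.univ, 0 < g i := by
    intro i _
    by_cases hdi : d i = 0
    · simp [hg, hdi]
    · have hxi : xbar i ≠ 0 := fun h => hdi (hsupp i h)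
      simp only [hg, hdi, if_false]
      exact div_pos (abs_pos.2 hxi) (abs_pos.2 hdi)
  set t : ℝ := (Finset.univ.inf' hne g) / 2 with ht
  have hinfpos : 0 < Finset.univ.inf' hne g := by
    rw [Finset.lt_inf'_iff]
    exact hgpos
  have htpos : 0 < t := by positivity
  have hkey : ∀ i, d i ≠ 0 → t * |d i| < |xbar i| := by
    intro i hdi
    have h1 : t < g i := lt_of_lt_of_le (by linarith) (Finset.inf'_le _ (Finset.mem_univ i))
    have h2 : g i = |xbar i| / |d i| := by simp [hg, hdi]
    rw [h2] at h1
    have := (lt_div_iff₀ (abs_pos.2 hdi)).1 h1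
    linarith
  have hstrict : ∀ i, d i ≠ 0 →
      |xbar i + t * d i| ^ p + |xbar i - t * d i| ^ p < 2 * |xbar i| ^ p := by
    intro i hdi
    have hlt : t * |d i| < |xbar i| := hkey i hdi
    have habs : |t * d i| < |xbar i| := by
      rw [abs_mul, abs_of_pos htpos]; exact hlt
    have hu : 0 < |xbar i + t * d i| := by
      rw [abs_pos]
      intro h
      have hxe : xbar i = -(t * d i) := by linarith [h]
      rw [hxe] at habs
      simp at habs
    have hv : 0 < |xbar i - t * d i| := by
      rw [abs_pos]
      intro h
      have hxe : xbar i = t * d i := by linarith [h]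
      rw [hxe] at habs
      simp at habs
    rcases abs_lt.1 habs with ⟨h1, h2⟩
    have htd : t * d i ≠ 0 := mul_ne_zero (ne_of_gt htpos) hdi
    have hsum : |xbar i + t * d i| + |xbar i - t * d i| = 2 * |xbar i| := by
      rcases lt_trichotomy (xbar i) 0 with hx | hx | hx
      · have hax : |xbar i| = -xbar i := abs_of_neg hx
        rw [hax, abs_of_neg (by linarith : xbar i + t * d i < 0),
          abs_of_neg (by linarith : xbar i - t * d i < 0)]
        ring
      · exact absurd (hsupp i hx) hdi
      · have hax : |xbar i| = xbar i := abs_of_pos hx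
        rw [hax, abs_of_pos (by linarith : 0 < xbar i + t * d i),
          abs_of_pos (by linarith : 0 < xbar i - t * d i)]
        ring
    have huv : |xbar i + t * d i| ≠ |xbar i - t * d i| := by
      rcases lt_trichotomy (xbar i) 0 with hx | hx | hx
      · have hax : |xbar i| = -xbar i := abs_of_neg hx
        rw [abs_of_neg (by linarith : xbar i + t * d i < 0),
          abs_of_neg (by linarith : xbar i - t * d i < 0)]
        intro h
        apply htd; linarith
      · exact absurd (hsupp i hx) hdi
      · have hax : |xbar i| = xbar i := abs_of_pos hx
        rw [abs_of_pos (by linarith : 0 < xbar i + t * d i),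
          abs_of_pos (by linarith : 0 < xbar i - t * d i)]
        intro h
        apply htd; linarith
    have hmid := mid_strict hp hp1 hu hv huv
    rw [hsum] at hmid
    have h2 : (2 * |xbar i| / 2) = |xbar i| := by ring
    rw [h2] at hmid
    linarith
  have hpt : ∀ i ∈ Finset.univ,
      |xbar i + t * d i| ^ p + |xbar i - t * d i| ^ p ≤ 2 * |xbar i| ^ p := by
    intro i _
    by_cases hdi : d i = 0
    · rw [hdi]; ring_nf; rw [mul_comm]
    · exact (hstrict i hdi).le
  have hsumlt : ∑ i, (|xbar i + t * d i| ^ p + |xbar i - t * d i| ^ p)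
      < ∑ i, 2 * |xbar i| ^ p :=
    Finset.sum_lt_sum hpt ⟨j, Finset.mem_univ j, hstrict j hj⟩
  rw [Finset.sum_add_distrib, ← Finset.mul_sum] at hsumlt
  have hfeas : ∀ s : ℝ, A.mulVec (xbar + s • d) = b := by
    intro s
    rw [Matrix.mulVec_add, Matrix.mulVec_smul, hxb, hd]
    simp
  have hplus := hmin (xbar + t • d) (hfeas t)
  have hminus := hmin (xbar + (-t) • d) (hfeas (-t))
  simp only [Pi.add_apply, Pi.smul_apply, smul_eq_mul] at hplus hminus
  have heq : ∀ i, xbar i + (-t) * d i = xbar i - t * d i := fun i => by ring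
  simp only [heq] at hminus
  linarith

/-- Theorem 2, Peng–Yue–Li: if `A x = b` is solvable, there is a constant
`p(A,b) > 0` such that for all `0 < p < p(A,b)`, every minimizer of `‖·‖_p^p` over
`{x | A x = b}` is also a minimizer of `‖·‖₀` over that set. -/
theorem stmt6 (n m : ℕ) (A : Matrix (Fin n) (Fin m) ℝ) (b : Fin n → ℝ)
    (hb : ∃ x : Fin m → ℝ, A.mulVec x = b) :
    ∃ pAb : ℝ, 0 < pAb ∧ ∀ p : ℝ, 0 < p → p < pAb →
      ∀ xbar : Fin m → ℝ, A.mulVec xbar = b →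
        (∀ y : Fin m → ℝ, A.mulVec y = b → ∑ i, |xbar i| ^ p ≤ ∑ i, |y i| ^ p) →
        ∀ y : Fin m → ℝ, A.mulVec y = b → l0norm xbar ≤ l0norm y := by
  classical
  -- the minimal l0 value
  set S : Set ℕ := {k | ∃ y : Fin m → ℝ, A.mulVec y = b ∧ l0norm y = k} with hS
  have hSne : S.Nonempty := by
    obtain ⟨x0, hx0⟩ := hb
    exact ⟨l0norm x0, x0, hx0, rfl⟩
  set k0 : ℕ := sInf S with hk0
  obtain ⟨xstar, hxstar, hxstark⟩ : ∃ y, A.mulVec y = b ∧ l0norm y = k0 := Nat.sInf_mem hSne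
  -- the set of feasible points whose support columns are "independent"
  set V : Set (Fin m → ℝ) := {x | A.mulVec x = b ∧
    ∀ d : Fin m → ℝ, A.mulVec d = 0 → (∀ i, x i = 0 → d i = 0) → d = 0} with hV
  have hVfin : V.Finite := by
    have hinj : Set.InjOn (fun x : Fin m → ℝ => Finset.univ.filter (fun i => x i ≠ 0)) V := by
      intro x hx x' hx' hxx'
      have hd : A.mulVec (x - x') = 0 := by
        rw [Matrix.mulVec_sub, hx.1, hx'.1, sub_self]
      have hsupp : ∀ i, x i = 0 → (x - x') i = 0 := by
        intro i hi
        have : x' i = 0 := by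
          by_contra h
          have hmem : i ∈ Finset.univ.filter (fun i => x' i ≠ 0) := by
            simp [h]
          simp only [] at hxx'
          rw [← hxx'] at hmem
          simp [hi] at hmem
        simp [Pi.sub_apply, hi, this]
      have := hx.2 (x - x') hd hsupp
      exact sub_eq_zero.1 this
    exact Set.Finite.of_finite_image (Set.toFinite _) hinj
  -- eventually, things are good
  have hev : ∀ᶠ p in nhdsWithin (0:ℝ) (Set.Ioi 0),
      p < 1 ∧ ∀ x ∈ hVfin.toFinset, k0 < l0norm x → ∑ i, |xstar i| ^ p < ∑ i, |x i| ^ p := by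
    refine Filter.Eventually.and ?_ ?_
    · exact eventually_nhdsWithin_of_eventually_nhds (Filter.Tendsto.eventually_lt_const one_pos tendsto_id)
    · rw [Filter.eventually_all_finset]
      intro x _
      by_cases hkx : k0 < l0norm x
      · have h1 := tendsto_abs_rpow_sum xstar
        have h2 := tendsto_abs_rpow_sum x
        rw [show ((Finset.univ.filter (fun i => xstar i ≠ 0)).card : ℝ) = (k0:ℝ) by
          rw [← hxstark]; rfl] at h1
        have hlt : (k0 : ℝ) < ((Finset.univ.filter (fun i => x i ≠ 0)).card : ℝ) := by
          exact_mod_cast hkx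
        exact (h1.eventually_lt h2 hlt).mono (fun p hp _ => hp)
      · exact Filter.Eventually.of_forall (fun p hk => absurd hk hkx)
  rw [eventually_nhdsWithin_iff, Metric.eventually_nhds_iff] at hev
  obtain ⟨ε, hε, hball⟩ := hev
  refine ⟨ε, hε, ?_⟩
  intro p hp hpε xbar hxbar hmin y hy
  have hdist : dist p 0 < ε := by
    rw [Real.dist_eq, sub_zero, abs_of_pos hp]; exact hpε
  obtain ⟨hp1, hgood⟩ := hball hdist (Set.mem_Ioi.2 hp)
  have hxV : xbar ∈ V :=
    ⟨hxbar, fun d hd hs => kernel_of_min A b hp hp1 xbar hxbar hmin d hd hs⟩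
  have hle : l0norm xbar ≤ k0 := by
    by_contra h
    push_neg at h
    have hgt := hgood xbar (hVfin.mem_toFinset.2 hxV) h
    have h2 := hmin xstar hxstar
    linarith
  calc l0norm xbar ≤ k0 := hle
    _ ≤ l0norm y := Nat.sInf_le ⟨y, hy, rfl⟩
end

section
/- Let A be a real n×m matrix and let t ≥ 1 be a natural number such that every nonzero x ∈ Ker(A) satisfies ‖x‖₀ ≥ 2t+1. Then there exists a constant u > 0 such that ‖Az‖₂ ≥ u‖z‖₂ for every z ∈ ℝ^m with ‖z‖₀ ≤ 2t. -/
/-- The Euclidean norm of a vector in `ℝ^k`. -/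
noncomputable def l2norm {k : ℕ} (x : Fin k → ℝ) : ℝ :=
  Real.sqrt (∑ i, (x i) ^ 2)

/-!
The `2t`-sparse vectors are covered by the finitely many coordinate subspaces spanned by at most
`2t` coordinates. By the hypothesis on the kernel, `A` is injective on each of them, and an
injective linear map on a finite-dimensional space is antilipschitz, so `A` is bounded below on
each subspace; the smallest of these finitely many bounds works for all sparse vectors.
-/

open WithLp (toLp ofLp)

section LowerBound

variable {𝕜 E F : Type*} [NontriviallyNormedField 𝕜] [CompleteSpace 𝕜]
  [NormedAddCommGroup E] [NormedSpace 𝕜 E] [FiniteDimensional 𝕜 E]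
  [NormedAddCommGroup F] [NormedSpace 𝕜 F]

theorem LinearMap.exists_pos_mul_norm_le_of_disjoint_ker (f : E →ₗ[𝕜] F) {V : Submodule 𝕜 E}
    (hV : Disjoint V (LinearMap.ker f)) : ∃ u > 0, ∀ z ∈ V, u * ‖z‖ ≤ ‖f z‖ := by
  have hinj : LinearMap.ker (f ∘ₗ V.subtype) = ⊥ := by
    rw [LinearMap.ker_comp, ← Submodule.disjoint_iff_comap_eq_bot]
    exact hV
  obtain ⟨K, hK, hanti⟩ := (f ∘ₗ V.subtype).exists_antilipschitzWith hinj
  refine ⟨(K : ℝ)⁻¹, by positivity, fun z hz => ?_⟩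
  have hle := hanti.le_mul_norm_sub 0 ⟨z, hz⟩
  rw [inv_mul_le_iff₀ (by positivity)]
  simpa using hle

theorem LinearMap.exists_pos_mul_norm_le_of_forall_disjoint_ker {ι : Type*} (f : E →ₗ[𝕜] F)
    (s : Finset ι) (V : ι → Submodule 𝕜 E) (hV : ∀ i ∈ s, Disjoint (V i) (LinearMap.ker f)) :
    ∃ u > 0, ∀ i ∈ s, ∀ z ∈ V i, u * ‖z‖ ≤ ‖f z‖ := by
  classical
  induction s using Finset.induction_on with
  | empty => exact ⟨1, one_pos, by simp⟩
  | insert j s hj ih =>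
    obtain ⟨u, hu, hs⟩ := ih fun i hi => hV i (Finset.mem_insert_of_mem hi)
    obtain ⟨v, hv, hjV⟩ :=
      f.exists_pos_mul_norm_le_of_disjoint_ker (hV j (Finset.mem_insert_self j s))
    refine ⟨min u v, lt_min hu hv, ?_⟩
    rintro i hi z hz
    rcases Finset.mem_insert.1 hi with rfl | hi
    · exact (mul_le_mul_of_nonneg_right (min_le_right u v) (norm_nonneg z)).trans (hjV z hz)
    · exact (mul_le_mul_of_nonneg_right (min_le_left u v) (norm_nonneg z)).trans (hs i hi z hz)

end LowerBound

noncomputable def supportedIn (𝕜 : Type*) [RCLike 𝕜] {ι : Type*} (T : Finset ι) :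
    Submodule 𝕜 (EuclideanSpace 𝕜 ι) :=
  ⨅ i ∉ T, LinearMap.ker (EuclideanSpace.proj (𝕜 := 𝕜) i).toLinearMap

theorem mem_supportedIn {𝕜 : Type*} [RCLike 𝕜] {ι : Type*} {T : Finset ι}
    {z : EuclideanSpace 𝕜 ι} : z ∈ supportedIn 𝕜 T ↔ ∀ i ∉ T, z i = 0 := by
  simp [supportedIn]

theorem l0norm_le_card_of_mem_supportedIn {m : ℕ} {T : Finset (Fin m)}
    {z : EuclideanSpace ℝ (Fin m)} (hz : z ∈ supportedIn ℝ T) : l0norm (ofLp z) ≤ T.card := by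
  refine Finset.card_le_card fun i hi => ?_
  by_contra hiT
  exact (Finset.mem_filter.1 hi).2 (mem_supportedIn.1 hz i hiT)

theorem toLp_mem_supportedIn_support {m : ℕ} (x : Fin m → ℝ) :
    toLp 2 x ∈ supportedIn ℝ (Finset.univ.filter fun i => x i ≠ 0) :=
  mem_supportedIn.2 fun i hi => by simpa using hi

theorem l2norm_eq_norm_toLp {k : ℕ} (x : Fin k → ℝ) : l2norm x = ‖toLp 2 x‖ := by
  simp [l2norm, EuclideanSpace.norm_eq]

theorem stmt7_general (n m : ℕ) (A : Matrix (Fin n) (Fin m) ℝ) (t : ℕ)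
    (hker : ∀ x : Fin m → ℝ, x ≠ 0 → A.mulVec x = 0 → 2 * t + 1 ≤ l0norm x) :
    ∃ u : ℝ, 0 < u ∧ ∀ z : Fin m → ℝ, l0norm z ≤ 2 * t →
      u * l2norm z ≤ l2norm (A.mulVec z) := by
  have hdisj : ∀ T ∈ Finset.univ.filter (fun T : Finset (Fin m) => T.card ≤ 2 * t),
      Disjoint (supportedIn ℝ T) (LinearMap.ker (Matrix.toLpLin 2 2 A)) := by
    intro T hT
    rw [Submodule.disjoint_def]
    intro z hzT hzA
    by_contra hz
    have hsparse := hker (ofLp z) (by simpa using hz) (by simpa [Matrix.toLpLin_apply] using hzA)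
    have hsupp := l0norm_le_card_of_mem_supportedIn hzT
    have hcard := (Finset.mem_filter.1 hT).2
    omega
  obtain ⟨u, hu, hbound⟩ :=
    (Matrix.toLpLin 2 2 A).exists_pos_mul_norm_le_of_forall_disjoint_ker _ (supportedIn ℝ) hdisj
  refine ⟨u, hu, fun z hz => ?_⟩
  simpa [l2norm_eq_norm_toLp, Matrix.toLpLin_apply] using
    hbound _ (Finset.mem_filter.2 ⟨Finset.mem_univ _, hz⟩) _ (toLp_mem_supportedIn_support z)

/-- Lemma 1, existence part: if every nonzero kernel vector of `A` has at least
`2t+1` nonzero entries (`t ≥ 1`), then there is `u > 0` with `‖A z‖₂ ≥ u ‖z‖₂` for every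
`z` with `‖z‖₀ ≤ 2t`. -/
theorem stmt7 (n m : ℕ) (A : Matrix (Fin n) (Fin m) ℝ) (t : ℕ) (ht : 1 ≤ t)
    (hker : ∀ x : Fin m → ℝ, x ≠ 0 → A.mulVec x = 0 → 2 * t + 1 ≤ l0norm x) :
    ∃ u : ℝ, 0 < u ∧ ∀ z : Fin m → ℝ, l0norm z ≤ 2 * t →
      u * l2norm z ≤ l2norm (A.mulVec z) :=
  stmt7_general n m A t hker
end

section
/- Let A be a real n×m matrix and let t ≥ 1 be a natural number such that every nonzero x ∈ Ker(A) satisfies ‖x‖₀ ≥ 2t+1. Then there exist constants u and w with 0 < u ≤ w ≤ λ_max(AᵀA) such that u‖x‖₂² ≤ ‖Ax‖₂² ≤ w‖x‖₂² for every x ∈ ℝ^m with ‖x‖₀ ≤ 2t. -/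
/-!
Lower bound: the `2t`-sparse vectors form a closed cone that meets `Ker A` only in `0`, so
`‖A x‖ / ‖x‖` attains a positive minimum on the compact set of sparse unit vectors. Upper bound:
by the spectral theorem `λ_max • 1 - AᵀA` is positive semidefinite. Evaluating both bounds at a
standard basis vector, which is `2t`-sparse as `t ≥ 1`, gives `u ≤ λ_max`.
-/

open Matrix Metric Unitary WithLp
open scoped ComplexOrder

theorem Matrix.IsHermitian.posSemidef_smul_one_sub {𝕜 n : Type*} [RCLike 𝕜] [Fintype n]
    [DecidableEq n] {M : Matrix n n 𝕜} (hM : M.IsHermitian) {c : ℝ}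
    (hc : ∀ i, hM.eigenvalues i ≤ c) : ((c : 𝕜) • 1 - M).PosSemidef := by
  have hdiag : (diagonal fun i => ((c - hM.eigenvalues i : ℝ) : 𝕜)) =
      (c : 𝕜) • 1 - diagonal (RCLike.ofReal ∘ hM.eigenvalues) := by
    ext i j
    by_cases h : i = j <;> simp [h, Algebra.algebraMap_eq_smul_one, sub_smul]
  have hconj : (c : 𝕜) • 1 - M = conjStarAlgAut 𝕜 _ hM.eigenvectorUnitary
      (diagonal fun i => ((c - hM.eigenvalues i : ℝ) : 𝕜)) := by
    conv_lhs => rw [hM.spectral_theorem]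
    rw [hdiag, map_sub, map_smul, map_one]
  rw [hconj, conjStarAlgAut_apply, isUnit_coe.posSemidef_star_right_conjugate_iff,
    posSemidef_diagonal_iff]
  exact fun i => RCLike.ofReal_nonneg.2 (sub_nonneg.2 (hc i))

theorem Matrix.IsHermitian.re_dotProduct_mulVec_le {𝕜 n : Type*} [RCLike 𝕜] [Fintype n]
    [DecidableEq n] {M : Matrix n n 𝕜} (hM : M.IsHermitian) {c : ℝ}
    (hc : ∀ i, hM.eigenvalues i ≤ c) (x : n → 𝕜) :
    RCLike.re (star x ⬝ᵥ M *ᵥ x) ≤ c * RCLike.re (star x ⬝ᵥ x) := by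
  simpa [sub_mulVec, smul_mulVec, dotProduct_sub, dotProduct_smul, RCLike.smul_re] using
    (hM.posSemidef_smul_one_sub hc).re_dotProduct_nonneg x

theorem exists_pos_mul_norm_le_norm_of_isClosed_cone {E F : Type*} [NormedAddCommGroup E]
    [NormedSpace ℝ E] [FiniteDimensional ℝ E] [NormedAddCommGroup F] [NormedSpace ℝ F]
    (f : E →ₗ[ℝ] F) {S : Set E} (hS : IsClosed S) (hS_smul : ∀ a : ℝ, ∀ x ∈ S, a • x ∈ S)
    (hf : ∀ x ∈ S, f x = 0 → x = 0) : ∃ c > 0, ∀ x ∈ S, c * ‖x‖ ≤ ‖f x‖ := by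
  have := FiniteDimensional.proper_real E
  have hK : IsCompact (S ∩ sphere 0 1) := (isCompact_sphere 0 1).inter_left hS
  obtain ⟨c, hc, hcK⟩ := hK.exists_forall_le' (a := 0) (f := fun x => ‖f x‖)
    f.continuous_of_finiteDimensional.norm.continuousOn fun x hx =>
      norm_pos_iff.2 fun hfx => ne_of_mem_sphere hx.2 one_ne_zero (hf x hx.1 hfx)
  refine ⟨c, hc, fun x hx => ?_⟩
  rcases eq_or_ne x 0 with rfl | hx0
  · simp
  have hx_pos : 0 < ‖x‖ := norm_pos_iff.2 hx0
  have := hcK (‖x‖⁻¹ • x) ⟨hS_smul _ x hx, by simp [norm_smul, hx_pos.ne']⟩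
  rwa [map_smul, norm_smul, norm_inv, norm_norm, le_inv_mul_iff₀ hx_pos, mul_comm] at this

section SparseVectors

variable {k : ℕ}

theorem l0norm_smul_le (a : ℝ) (x : Fin k → ℝ) : l0norm (a • x) ≤ l0norm x :=
  Finset.card_le_card fun i => by simp +contextual

theorem l0norm_single (i : Fin k) : l0norm (Pi.single i (1 : ℝ)) = 1 := by
  rw [l0norm, Finset.card_eq_one]
  exact ⟨i, by ext j; by_cases h : j = i <;> simp [h]⟩

theorem isOpen_setOf_lt_l0norm (r : ℕ) : IsOpen {x : Fin k → ℝ | r < l0norm x} := by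
  refine isOpen_iff_mem_nhds.2 fun x hx => ?_
  have hsupp : ∀ᶠ y in nhds x, ∀ i ∈ Finset.univ.filter (fun i => x i ≠ 0), y i ≠ 0 :=
    (Finset.eventually_all _).2 fun i hi =>
      (continuous_apply i).continuousAt.eventually_ne (Finset.mem_filter.1 hi).2
  filter_upwards [hsupp] with y hy
  exact hx.trans_le (Finset.card_le_card fun i hi => by simpa using hy i hi)

theorem isClosed_setOf_l0norm_le (r : ℕ) : IsClosed {x : Fin k → ℝ | l0norm x ≤ r} := by
  simpa only [Set.compl_ofPred, not_lt] using (isOpen_setOf_lt_l0norm r).isClosed_compl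

theorem l2norm_eq_norm (x : Fin k → ℝ) : l2norm x = ‖toLp 2 x‖ := by
  simp [l2norm, EuclideanSpace.norm_eq]

theorem sq_l2norm_eq_dotProduct (x : Fin k → ℝ) : l2norm x ^ 2 = x ⬝ᵥ x := by
  rw [l2norm, Real.sq_sqrt (Finset.sum_nonneg fun i _ => sq_nonneg _)]
  simp [dotProduct, sq]

theorem l2norm_single (i : Fin k) : l2norm (Pi.single i (1 : ℝ)) = 1 := by
  simp [l2norm, Pi.single_apply]

end SparseVectors

section MatrixBounds

variable {n m : ℕ} (A : Matrix (Fin n) (Fin m) ℝ)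

theorem sq_l2norm_mulVec_le {c : ℝ}
    (hc : c ∈ upperBounds {μ : ℝ | ∃ v : Fin m → ℝ, v ≠ 0 ∧ (Aᵀ * A) *ᵥ v = μ • v})
    (x : Fin m → ℝ) : l2norm (A *ᵥ x) ^ 2 ≤ c * l2norm x ^ 2 := by
  have hM : (Aᵀ * A).IsHermitian := by
    simpa using isHermitian_conjTranspose_mul_self A
  have heig : ∀ i, hM.eigenvalues i ≤ c := fun i =>
    hc ⟨_, (ofLp_eq_zero 2).not.2 (hM.eigenvectorBasis.orthonormal.ne_zero i),
      hM.mulVec_eigenvectorBasis i⟩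
  have hquad : l2norm (A *ᵥ x) ^ 2 = x ⬝ᵥ (Aᵀ * A) *ᵥ x := by
    rw [sq_l2norm_eq_dotProduct, ← mulVec_mulVec, mulVec_transpose, dotProduct_comm x,
      ← dotProduct_mulVec]
  simpa [hquad, sq_l2norm_eq_dotProduct] using hM.re_dotProduct_mulVec_le heig x

theorem exists_pos_mul_sq_l2norm_le_of_forall_lt_l0norm (k : ℕ)
    (hA : ∀ x : Fin m → ℝ, x ≠ 0 → A *ᵥ x = 0 → k < l0norm x) :
    ∃ c > 0, ∀ x : Fin m → ℝ, l0norm x ≤ k → c * l2norm x ^ 2 ≤ l2norm (A *ᵥ x) ^ 2 := by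
  obtain ⟨c, hc, hcS⟩ := exists_pos_mul_norm_le_norm_of_isClosed_cone (toLpLin 2 2 A)
    (S := {x | l0norm (ofLp x) ≤ k})
    ((isClosed_setOf_l0norm_le k).preimage (PiLp.continuous_ofLp 2 _))
    (fun a x hx => (l0norm_smul_le a _).trans hx)
    (fun x hx hAx => by
      by_contra hx0
      exact (hA _ ((ofLp_eq_zero 2).not.2 hx0) congr(ofLp $hAx)).not_ge hx)
  refine ⟨c ^ 2, by positivity, fun x hx => ?_⟩
  have hbound := pow_le_pow_left₀ (by positivity) (hcS (toLp 2 x) hx) 2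
  rwa [toLpLin_toLp, ← l2norm_eq_norm, ← l2norm_eq_norm, mul_pow] at hbound

end MatrixBounds

/-- Corollary 4: if every nonzero kernel vector of `A` has at least `2t+1`
nonzero entries (`t ≥ 1`), then there exist constants `0 < u ≤ w ≤ λ_max(AᵀA)` such that
`u ‖x‖₂² ≤ ‖A x‖₂² ≤ w ‖x‖₂²` for every `x` with `‖x‖₀ ≤ 2t`.  Here `λ_max(AᵀA)` is the
largest eigenvalue of `AᵀA`, characterized as the greatest element of its set of
eigenvalues. -/
theorem stmt8 (n m : ℕ) (A : Matrix (Fin n) (Fin m) ℝ) (t : ℕ) (ht : 1 ≤ t)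
    (hker : ∀ x : Fin m → ℝ, x ≠ 0 → A.mulVec x = 0 → 2 * t + 1 ≤ l0norm x)
    (lamMax : ℝ)
    (hlamMax : IsGreatest {μ : ℝ | ∃ v : Fin m → ℝ, v ≠ 0 ∧
      (A.transpose * A).mulVec v = μ • v} lamMax) :
    ∃ u w : ℝ, 0 < u ∧ u ≤ w ∧ w ≤ lamMax ∧
      ∀ x : Fin m → ℝ, l0norm x ≤ 2 * t →
        u * (l2norm x) ^ 2 ≤ (l2norm (A.mulVec x)) ^ 2 ∧
        (l2norm (A.mulVec x)) ^ 2 ≤ w * (l2norm x) ^ 2 := by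
  have hupper := sq_l2norm_mulVec_le A hlamMax.2
  obtain ⟨u, hu, hlower⟩ := exists_pos_mul_sq_l2norm_le_of_forall_lt_l0norm A (2 * t) hker
  obtain ⟨v, hv, -⟩ := hlamMax.1
  obtain ⟨i, -⟩ := Function.ne_iff.1 hv
  have hu_le : u ≤ lamMax := by
    simpa [l2norm_single] using
      (hlower (Pi.single i 1) (by rw [l0norm_single]; omega)).trans (hupper _)
  exact ⟨u, lamMax, hu, hu_le, le_rfl, fun x hx => ⟨hlower x hx, hupper x⟩⟩
end
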